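/- arXiv:2411.15793 — 2 statements merged into one kernel-verified Lean document; each statement's English description precedes it below -/
import Mathlib

section
/- Let ρ ≥ 0, and let s, t be reals with ρ ≤ s ≤ √(ρ²+1) and ρ ≤ t ≤ √(ρ²+1). Let x, y ∈ ℝ^d with ‖x‖² ≤ t² − ρ² and ‖y‖² ≤ s² − ρ², and let u, v ∈ [−1,1]. Define ξ := (⟨x,y⟩ + u·√(t² − ρ² − ‖x‖²)·√(s² − ρ² − ‖y‖²))·sign(st) + v·√(1 + ρ² − s²)·√(1 + ρ² − t²). Then |ξ| ≤ 1. -/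
/-!
Put `p = √(t² - ρ²)`, `q = √(s² - ρ²)`, `c = √(1 + ρ² - s²)`, `e = √(1 + ρ² - t²)`.
Since `‖x‖² + √(t² - ρ² - ‖x‖²)² = p²` (and likewise for `y`), Cauchy–Schwarz in the plane bounds
the first summand of `ξ` by `‖x‖‖y‖ + √(t² - ρ² - ‖x‖²) √(s² - ρ² - ‖y‖²) ≤ p q`; the second is at
most `c e`. Finally `p² + e² = q² + c² = 1`, so Cauchy–Schwarz once more gives `p q + e c ≤ 1`.
-/

theorem Real.abs_sign_le_one (r : ℝ) : |Real.sign r| ≤ 1 := by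
  rcases Real.sign_apply_eq r with h | h | h <;> simp [h]

theorem Real.sq_le_of_le_of_le_sqrt {ρ s c : ℝ} (hc : 0 ≤ c) (hρs : ρ ≤ s)
    (hs : s ≤ √(ρ ^ 2 + c)) : s ^ 2 ≤ ρ ^ 2 + c := by
  have hρ : -√(ρ ^ 2 + c) ≤ ρ := Real.neg_sqrt_le_of_sq_le (by linarith)
  calc s ^ 2 ≤ √(ρ ^ 2 + c) ^ 2 := sq_le_sq' (hρ.trans hρs) hs
    _ = ρ ^ 2 + c := Real.sq_sqrt (by positivity)

theorem Real.sqrt_mul_sqrt_add_sqrt_mul_sqrt_le {a b c d : ℝ} (ha : 0 ≤ a) (hb : 0 ≤ b)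
    (hc : 0 ≤ c) (hd : 0 ≤ d) : √a * √b + √c * √d ≤ √(a + c) * √(b + d) := by
  simpa [Fin.sum_univ_two] using Real.sum_sqrt_mul_sqrt_le Finset.univ (f := ![a, c])
    (g := ![b, d]) (Fin.forall_fin_two.2 ⟨ha, hc⟩) (Fin.forall_fin_two.2 ⟨hb, hd⟩)

theorem abs_mul_le_abs_of_abs_le_one {w b : ℝ} (hw : |w| ≤ 1) : |w * b| ≤ |b| := by
  rw [abs_mul]
  exact mul_le_of_le_one_left (abs_nonneg b) hw

theorem stmt_0_general (d : ℕ) (ρ s t : ℝ)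
    (hs1 : ρ ≤ s) (hs2 : s ≤ Real.sqrt (ρ^2 + 1))
    (ht1 : ρ ≤ t) (ht2 : t ≤ Real.sqrt (ρ^2 + 1))
    (x y : EuclideanSpace ℝ (Fin d))
    (hx : ‖x‖^2 ≤ t^2 - ρ^2) (hy : ‖y‖^2 ≤ s^2 - ρ^2)
    (u v : ℝ) (hu : u ∈ Set.Icc (-1 : ℝ) 1) (hv : v ∈ Set.Icc (-1 : ℝ) 1) :
    |((inner ℝ x y : ℝ) + u * Real.sqrt (t^2 - ρ^2 - ‖x‖^2) * Real.sqrt (s^2 - ρ^2 - ‖y‖^2))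
        * Real.sign (s * t)
      + v * Real.sqrt (1 + ρ^2 - s^2) * Real.sqrt (1 + ρ^2 - t^2)| ≤ 1 := by
  have hs := Real.sq_le_of_le_of_le_sqrt zero_le_one hs1 hs2
  have ht := Real.sq_le_of_le_of_le_sqrt zero_le_one ht1 ht2
  have hρt : 0 ≤ t ^ 2 - ρ ^ 2 := (sq_nonneg ‖x‖).trans hx
  have hρs : 0 ≤ s ^ 2 - ρ ^ 2 := (sq_nonneg ‖y‖).trans hy
  set a := √(t ^ 2 - ρ ^ 2 - ‖x‖ ^ 2)
  set b := √(s ^ 2 - ρ ^ 2 - ‖y‖ ^ 2)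
  set c := √(1 + ρ ^ 2 - s ^ 2)
  set e := √(1 + ρ ^ 2 - t ^ 2)
  have hab : ‖x‖ * ‖y‖ + a * b ≤ √(t ^ 2 - ρ ^ 2) * √(s ^ 2 - ρ ^ 2) := by
    simpa using Real.sqrt_mul_sqrt_add_sqrt_mul_sqrt_le (sq_nonneg ‖x‖) (sq_nonneg ‖y‖)
      (sub_nonneg.2 hx) (sub_nonneg.2 hy)
  have hce : √(t ^ 2 - ρ ^ 2) * √(s ^ 2 - ρ ^ 2) + e * c ≤ 1 := by
    simpa using Real.sqrt_mul_sqrt_add_sqrt_mul_sqrt_le hρt hρs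
      (by linarith : 0 ≤ 1 + ρ ^ 2 - t ^ 2) (by linarith : 0 ≤ 1 + ρ ^ 2 - s ^ 2)
  have hX : |inner ℝ x y + u * a * b| ≤ ‖x‖ * ‖y‖ + a * b := by
    rw [mul_assoc]
    refine (abs_add_le _ _).trans (add_le_add (abs_real_inner_le_norm x y) ?_)
    exact (abs_mul_le_abs_of_abs_le_one (abs_le.2 hu)).trans_eq (abs_of_nonneg (by positivity))
  have hsign : |(inner ℝ x y + u * a * b) * Real.sign (s * t)| ≤ |inner ℝ x y + u * a * b| := by
    rw [mul_comm]
    exact abs_mul_le_abs_of_abs_le_one (Real.abs_sign_le_one _)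
  have hv' : |v * c * e| ≤ c * e := by
    rw [mul_assoc]
    exact (abs_mul_le_abs_of_abs_le_one (abs_le.2 hv)).trans_eq (abs_of_nonneg (by positivity))
  calc _ ≤ |(inner ℝ x y + u * a * b) * Real.sign (s * t)| + |v * c * e| := abs_add_le _ _
    _ ≤ 1 := by linarith

theorem stmt_0 (d : ℕ) (ρ s t : ℝ) (hρ : 0 ≤ ρ)
    (hs1 : ρ ≤ s) (hs2 : s ≤ Real.sqrt (ρ^2 + 1))
    (ht1 : ρ ≤ t) (ht2 : t ≤ Real.sqrt (ρ^2 + 1))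
    (x y : EuclideanSpace ℝ (Fin d))
    (hx : ‖x‖^2 ≤ t^2 - ρ^2) (hy : ‖y‖^2 ≤ s^2 - ρ^2)
    (u v : ℝ) (hu : u ∈ Set.Icc (-1 : ℝ) 1) (hv : v ∈ Set.Icc (-1 : ℝ) 1) :
    |((inner ℝ x y : ℝ) + u * Real.sqrt (t^2 - ρ^2 - ‖x‖^2) * Real.sqrt (s^2 - ρ^2 - ‖y‖^2))
        * Real.sign (s * t)
      + v * Real.sqrt (1 + ρ^2 - s^2) * Real.sqrt (1 + ρ^2 - t^2)| ≤ 1 :=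
  stmt_0_general d ρ s t hs1 hs2 ht1 ht2 x y hx hy u v hu hv
end

section
/- Fix κ ∈ ℝ. There exists a constant C > 0 such that for all τ ∈ (0, ∞) and all θ, η ∈ [0, π] with θ ≤ η, one has (τ + π − η)^κ · exp(−η²/τ) ≤ C · (τ + π − θ)^κ · exp(−θ²/τ). -/
open Real

theorem stmt_2 (κ : ℝ) :
    ∃ C : ℝ, 0 < C ∧ ∀ τ : ℝ, 0 < τ → ∀ θ η : ℝ, θ ∈ Set.Icc (0 : ℝ) Real.pi →
      η ∈ Set.Icc (0 : ℝ) Real.pi → θ ≤ η →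
      (τ + Real.pi - η) ^ κ * Real.exp (-(η^2) / τ) ≤
        C * ((τ + Real.pi - θ) ^ κ * Real.exp (-(θ^2) / τ)) := by
  have hπ := Real.pi_pos
  rcases le_or_gt 0 κ with hκ | hκ
  · refine ⟨1, one_pos, ?_⟩
    intro τ hτ θ η hθ hη hle
    rw [one_mul]
    have ha : 0 ≤ τ + Real.pi - η := by have := hη.2; linarith
    have hb : τ + Real.pi - η ≤ τ + Real.pi - θ := by linarith
    apply mul_le_mul
    · exact Real.rpow_le_rpow ha hb hκ
    · apply Real.exp_le_exp.2
      have h2 : θ^2 ≤ η^2 := by nlinarith [hθ.1]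
      have hnum : -(η^2) ≤ -(θ^2) := by linarith
      exact div_le_div_of_nonneg_right hnum hτ.le
    · exact (Real.exp_pos _).le
    · exact (Real.rpow_nonneg (by linarith [hθ.2]) _)
  · set m := -κ with hm
    have hm0 : 0 < m := by simp only [hm]; linarith
    set K := max 2 (2*m/Real.pi) with hKdef
    have hK2 : (2:ℝ) ≤ K := le_max_left _ _
    have hKm : 2*m/Real.pi ≤ K := le_max_right _ _
    have hK0 : (0:ℝ) < K := by linarith
    refine ⟨K ^ m, Real.rpow_pos_of_pos hK0 m, ?_⟩
    intro τ hτ θ η hθ hη hle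
    have ha : 0 < τ + Real.pi - η := by have := hη.2; linarith
    have hb : 0 < τ + Real.pi - θ := by have := hθ.2; linarith
    set a := τ + Real.pi - η with hadef
    set b := τ + Real.pi - θ with hbdef
    set e := (η^2 - θ^2)/τ with hedef
    have hsq : θ^2 ≤ η^2 := by nlinarith [hθ.1]
    have he0 : 0 ≤ e := div_nonneg (by linarith) hτ.le
    -- key linear bound
    have hd : η - θ ≤ a + (2/Real.pi) * (a * e) := by
      rcases le_or_gt η (Real.pi/2) with h | h
      · have h1 : η - θ ≤ a := by
          have := hθ.1; simp only [hadef]; linarith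
        have h2 : (0:ℝ) ≤ (2/Real.pi) * (a*e) := mul_nonneg (by positivity) (mul_nonneg ha.le he0)
        linarith
      · have h1 : τ * e = η^2 - θ^2 := by
          rw [hedef]; field_simp
        have h2 : η - θ ≤ (2/Real.pi) * (τ * e) := by
          rw [h1]
          rw [div_mul_eq_mul_div, le_div_iff₀ hπ]
          nlinarith [hθ.1]
        have h3 : τ * e ≤ a * e := by
          apply mul_le_mul_of_nonneg_right _ he0
          simp only [hadef]; have := hη.2; linarith
        have h4 : (2/Real.pi) * (τ * e) ≤ (2/Real.pi) * (a * e) := by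
          apply mul_le_mul_of_nonneg_left h3 (by positivity)
        linarith
    have hbK : b ≤ a * (K * Real.exp (e/m)) := by
      have h2 : b ≤ a * (2 + (2/Real.pi) * e) := by
        have hb' : b = a + (η - θ) := by simp only [hadef, hbdef]; ring
        rw [hb']
        nlinarith [hd]
      have h3 : 2 + (2/Real.pi)*e ≤ K * (1 + e/m) := by
        have hc : 2/Real.pi ≤ K/m := by
          rw [div_le_div_iff₀ hπ hm0]
          rw [div_le_iff₀ hπ] at hKm
          linarith
        have : (2/Real.pi)*e ≤ (K/m)*e := mul_le_mul_of_nonneg_right hc he0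
        have hKe : (K/m)*e = K * (e/m) := by ring
        nlinarith
      have h4 : 1 + e/m ≤ Real.exp (e/m) := by linarith [Real.add_one_le_exp (e/m)]
      calc b ≤ a * (2 + (2/Real.pi)*e) := h2
        _ ≤ a * (K * (1 + e/m)) := by
            apply mul_le_mul_of_nonneg_left h3 ha.le
        _ ≤ a * (K * Real.exp (e/m)) := by
            apply mul_le_mul_of_nonneg_left _ ha.le
            exact mul_le_mul_of_nonneg_left h4 hK0.le
    have hpow : b ^ m ≤ a ^ m * (K ^ m * Real.exp e) := by
      have h := Real.rpow_le_rpow hb.le hbK hm0.le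
      rw [Real.mul_rpow ha.le (by positivity), Real.mul_rpow hK0.le (Real.exp_nonneg _)] at h
      rw [← Real.exp_mul, div_mul_cancel₀ e hm0.ne'] at h
      exact h
    -- multiply by exp(-(η^2)/τ)
    have key : b ^ m * Real.exp (-(η^2)/τ) ≤ (K ^ m * a ^ m) * Real.exp (-(θ^2)/τ) := by
      have hE : Real.exp e * Real.exp (-(η^2)/τ) = Real.exp (-(θ^2)/τ) := by
        rw [← Real.exp_add]
        congr 1
        rw [hedef]; field_simp
        ring
      calc b ^ m * Real.exp (-(η^2)/τ)
          ≤ (a ^ m * (K ^ m * Real.exp e)) * Real.exp (-(η^2)/τ) :=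
            mul_le_mul_of_nonneg_right hpow (Real.exp_nonneg _)
        _ = (K ^ m * a ^ m) * (Real.exp e * Real.exp (-(η^2)/τ)) := by ring
        _ = (K ^ m * a ^ m) * Real.exp (-(θ^2)/τ) := by rw [hE]
    -- convert the goal
    have haκ : a ^ κ = (a ^ m)⁻¹ := by
      rw [hm, ← Real.rpow_neg ha.le, neg_neg]
    have hbκ : b ^ κ = (b ^ m)⁻¹ := by
      rw [hm, ← Real.rpow_neg hb.le, neg_neg]
    rw [haκ, hbκ]
    have hA : (0:ℝ) < a ^ m := Real.rpow_pos_of_pos ha m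
    have hB : (0:ℝ) < b ^ m := Real.rpow_pos_of_pos hb m
    rw [inv_mul_eq_div, mul_comm (K^m), mul_assoc, inv_mul_eq_div, 
      div_le_div_iff₀ hA hB]
    calc Real.exp (-(η^2)/τ) * b ^ m ≤ (K ^ m * a ^ m) * Real.exp (-(θ^2)/τ) := by
          rw [mul_comm]; exact key
      _ = Real.exp (-(θ^2)/τ) * K ^ m * a ^ m := by ring
end
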